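/- arXiv:2305.19963 — 2 statements merged into one kernel-verified Lean document; each statement's English description precedes it below -/
import Mathlib

section
/- Let u and v be two global solutions of the nonlinear obstacle problem on all of ℝ^d such that u(x) − v(x) → 0 as |x| → ∞. Then u = v identically on ℝ^d. -/
/-!
An Aleksandrov–Bakelman–Pucci type argument. If `w = u - v` were positive somewhere, then, as
`w → 0` at infinity, every small tilt `w - ⟪p, ·⟫` with `‖p‖ ≤ ρ` attains a local maximum at a
point where `w > 0`, hence `u > 0` and `F(D²u) = 1`. At such a point `∇u - ∇v = p` and
`D²u ≤ D²v`, so `F(D²v) ≤ F(D²u)` and uniform ellipticity force `D²u = D²v`. Hence the ball of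
radius `ρ` is covered by the images, under the locally Lipschitz map `∇u - ∇v`, of the null set
where a Hessian is missing and of the critical set of `∇u - ∇v`; both images are null.
-/

open MeasureTheory Metric Filter

attribute [local instance] Matrix.normedAddCommGroup Matrix.normedSpace

noncomputable def matOpNorm {d : ℕ} (M : Matrix (Fin d) (Fin d) ℝ) : ℝ :=
  ‖(Matrix.toEuclideanCLM (𝕜 := ℝ) M : EuclideanSpace ℝ (Fin d) →L[ℝ] EuclideanSpace ℝ (Fin d))‖

def IsUniformlyElliptic {d : ℕ} (F : Matrix (Fin d) (Fin d) ℝ → ℝ) (Λ : ℝ) : Prop :=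
  1 ≤ Λ ∧ ∀ M P : Matrix (Fin d) (Fin d) ℝ, M.IsSymm → P.IsSymm → P.PosSemidef →
    (1 / Λ) * matOpNorm P ≤ F (M + P) - F M ∧ F (M + P) - F M ≤ Λ * matOpNorm P

def IsGoodOperator {d : ℕ} (F : Matrix (Fin d) (Fin d) ℝ → ℝ) (Λ : ℝ) : Prop :=
  IsUniformlyElliptic F Λ ∧ ConvexOn ℝ {M | M.IsSymm} F ∧ ContDiffOn ℝ 1 F {M | M.IsSymm}

/-- `u` solves the nonlinear obstacle problem for `F` on `Ω`. -/
def IsSolutionOn {d : ℕ} (F : Matrix (Fin d) (Fin d) ℝ → ℝ)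
    (u : EuclideanSpace ℝ (Fin d) → ℝ) (Ω : Set (EuclideanSpace ℝ (Fin d))) : Prop :=
  ContDiffOn ℝ 1 u Ω ∧
  (∀ x ∈ Ω, ∃ (K : NNReal) (t : Set (EuclideanSpace ℝ (Fin d))),
    t ∈ nhdsWithin x Ω ∧ LipschitzOnWith K (gradient u) t) ∧
  (∀ x ∈ Ω, 0 ≤ u x) ∧
  ∃ H : EuclideanSpace ℝ (Fin d) → Matrix (Fin d) (Fin d) ℝ,
    ∀ᵐ x ∂(volume : Measure (EuclideanSpace ℝ (Fin d))), x ∈ Ω →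
      (H x).IsSymm ∧
      HasFDerivAt (gradient u)
        (Matrix.toEuclideanCLM (𝕜 := ℝ) (H x) :
          EuclideanSpace ℝ (Fin d) →L[ℝ] EuclideanSpace ℝ (Fin d)) x ∧
      F (H x) ≤ 1 ∧ (0 < u x → F (H x) = 1)

def contactSet {d : ℕ} (u : EuclideanSpace ℝ (Fin d) → ℝ) : Set (EuclideanSpace ℝ (Fin d)) :=
  {x | u x = 0}

def MemGc {d : ℕ} (F : Matrix (Fin d) (Fin d) ℝ → ℝ)
    (u : EuclideanSpace ℝ (Fin d) → ℝ) : Prop :=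
  IsSolutionOn F u Set.univ ∧ (contactSet u).Nonempty ∧ IsCompact (contactSet u)

noncomputable def quadPoly {d : ℕ} (A : Matrix (Fin d) (Fin d) ℝ)
    (x₀ : EuclideanSpace ℝ (Fin d)) (a : ℝ) (x : EuclideanSpace ℝ (Fin d)) : ℝ :=
  (1/2) * (inner ℝ (x - x₀) (Matrix.toEuclideanCLM (𝕜 := ℝ) A (x - x₀)) : ℝ) + a

def MemPc {d : ℕ} (F : Matrix (Fin d) (Fin d) ℝ → ℝ)
    (Q : EuclideanSpace ℝ (Fin d) → ℝ) : Prop :=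
  ∃ (A : Matrix (Fin d) (Fin d) ℝ) (x₀ : EuclideanSpace ℝ (Fin d)) (a : ℝ),
    A.IsSymm ∧ A.PosDef ∧ F A = 1 ∧ a ≤ 0 ∧ Q = quadPoly A x₀ a

/-- `f x = O(|x|^{2-d})` as `|x| → ∞`. -/
def DecaysAtInfinity (d : ℕ) (f : EuclideanSpace ℝ (Fin d) → ℝ) : Prop :=
  ∃ C R : ℝ, 0 < C ∧ 0 < R ∧ ∀ x : EuclideanSpace ℝ (Fin d),
    R ≤ ‖x‖ → |f x| ≤ C * ‖x‖ ^ ((2 : ℝ) - d)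

open Topology
open scoped RealInnerProductSpace

theorem IsLocalMax.hasDerivAt_nonpos_of_eventually_hasDerivAt {φ ψ : ℝ → ℝ} {a c : ℝ}
    (hmax : IsLocalMax φ a) (hφ : ∀ᶠ t in 𝓝 a, HasDerivAt φ (ψ t) t) (hψ : HasDerivAt ψ c a) :
    c ≤ 0 := by
  by_contra! hc
  have hψa : ψ a = 0 := hmax.hasDerivAt_eq_zero hφ.self_of_nhds
  have hψpos : ∀ᶠ t in 𝓝[>] a, 0 < ψ t := by
    filter_upwards [nhdsGT_le_nhdsNE a
      ((hasDerivAt_iff_tendsto_slope.1 hψ).eventually (eventually_gt_nhds hc)),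
      self_mem_nhdsWithin] with t hslope ht
    exact pos_of_slope_pos ht hslope hψa
  obtain ⟨ε, hε, hball⟩ :=
    Metric.eventually_nhds_iff_ball.1 ((hmax.and hφ).and (eventually_nhdsWithin_iff.1 hψpos))
  have hIcc : Set.Icc a (a + ε / 2) ⊆ ball a ε := fun t ht ↦ by
    rw [mem_ball, Real.dist_eq, abs_lt]; constructor <;> linarith [ht.1, ht.2]
  obtain ⟨s, hs, hslope⟩ := exists_hasDerivAt_eq_slope φ ψ (by linarith : a < a + ε / 2)
    (fun t ht ↦ ((hball t (hIcc ht)).1.2).continuousAt.continuousWithinAt)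
    (fun t ht ↦ (hball t (hIcc (Set.Ioo_subset_Icc_self ht))).1.2)
  have hψs : 0 < ψ s := (hball s (hIcc (Set.Ioo_subset_Icc_self hs))).2 hs.1
  have hφle : φ (a + ε / 2) ≤ φ a := (hball _ (hIcc (Set.right_mem_Icc.2 (by linarith)))).1.1
  have : (φ (a + ε / 2) - φ a) / (a + ε / 2 - a) ≤ 0 :=
    div_nonpos_of_nonpos_of_nonneg (by linarith) (by linarith)
  linarith

section Gradient

variable {E : Type*} [NormedAddCommGroup E] [InnerProductSpace ℝ E] [CompleteSpace E]

theorem IsLocalMax.inner_apply_self_nonpos {f : E → ℝ} {g : E → E} {D : E →L[ℝ] E} {x : E}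
    (hmax : IsLocalMax f x) (hf : ∀ᶠ y in 𝓝 x, HasGradientAt f (g y) y) (hg : HasFDerivAt g D x)
    (ξ : E) : ⟪ξ, D ξ⟫ ≤ 0 := by
  set α : ℝ → E := fun t ↦ x + t • ξ
  have hα : ∀ t, HasDerivAt α ξ t := fun t ↦ by
    simpa only [id, one_smul] using ((hasDerivAt_id t).smul_const ξ).const_add x
  have hα0 : α 0 = x := by simp [α]
  have hφ : ∀ᶠ t in 𝓝 0, HasDerivAt (f ∘ α) ⟪ξ, g (α t)⟫ t := by
    have hαx : Tendsto α (𝓝 0) (𝓝 x) := hα0 ▸ (hα 0).continuousAt.tendsto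
    filter_upwards [hαx.eventually hf] with t ht
    simpa [real_inner_comm] using ht.hasFDerivAt.comp_hasDerivAt t (hα t)
  have hψ : HasDerivAt (fun t ↦ ⟪ξ, g (α t)⟫) ⟪ξ, D ξ⟫ 0 :=
    (innerSL ℝ ξ).hasFDerivAt.comp_hasDerivAt 0 ((hα0 ▸ hg).comp_hasDerivAt 0 (hα 0))
  exact (hα0 ▸ hmax).comp_continuous (hα 0).continuousAt
    |>.hasDerivAt_nonpos_of_eventually_hasDerivAt hφ hψ

theorem IsLocalMax.hasGradientAt_eq_zero {f : E → ℝ} {x g : E} (hmax : IsLocalMax f x)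
    (hf : HasGradientAt f g x) : g = 0 := by
  simpa using hmax.hasFDerivAt_eq_zero hf.hasFDerivAt

theorem HasGradientAt.sub {f₁ f₂ : E → ℝ} {g₁ g₂ x : E} (h₁ : HasGradientAt f₁ g₁ x)
    (h₂ : HasGradientAt f₂ g₂ x) : HasGradientAt (fun y ↦ f₁ y - f₂ y) (g₁ - g₂) x := by
  rw [hasGradientAt_iff_hasFDerivAt, map_sub]
  exact h₁.hasFDerivAt.sub h₂.hasFDerivAt

theorem hasGradientAt_inner_left (p x : E) : HasGradientAt (fun y ↦ ⟪p, y⟫) p x := by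
  rw [hasGradientAt_iff_hasFDerivAt]
  exact (InnerProductSpace.toDual ℝ E p).hasFDerivAt

theorem hasGradientAt_sub_sub_inner {u v : E → ℝ} {x : E} (hu : DifferentiableAt ℝ u x)
    (hv : DifferentiableAt ℝ v x) (p : E) :
    HasGradientAt (fun z ↦ u z - v z - ⟪p, z⟫) (gradient u x - gradient v x - p) x :=
  (hu.hasGradientAt.sub hv.hasGradientAt).sub (hasGradientAt_inner_left p x)

end Gradient

theorem Matrix.posSemidef_of_inner_toEuclideanCLM_nonneg {n : Type*} [Fintype n] [DecidableEq n]
    {A : Matrix n n ℝ} (hA : A.IsSymm)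
    (h : ∀ x : EuclideanSpace ℝ n, 0 ≤ ⟪x, Matrix.toEuclideanCLM (𝕜 := ℝ) A x⟫) :
    A.PosSemidef := by
  rw [Matrix.posSemidef_iff_dotProduct_mulVec]
  refine ⟨Matrix.isHermitian_iff_isSymm.2 hA, fun x ↦ ?_⟩
  have hx := h (WithLp.toLp 2 x)
  rw [Matrix.inner_toEuclideanCLM] at hx
  simpa using hx

theorem IsUniformlyElliptic.eq_of_posSemidef_sub {d : ℕ} {F : Matrix (Fin d) (Fin d) ℝ → ℝ}
    {Λ : ℝ} (hF : IsUniformlyElliptic F Λ) {M N : Matrix (Fin d) (Fin d) ℝ} (hM : M.IsSymm)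
    (hN : N.IsSymm) (hMN : (N - M).PosSemidef) (hle : F N ≤ F M) : M = N := by
  have hΛ : 0 < 1 / Λ := one_div_pos.2 (one_pos.trans_le hF.1)
  have hlower := (hF.2 M (N - M) hM (hN.sub hM) hMN).1
  rw [add_sub_cancel] at hlower
  have hnorm : matOpNorm (N - M) = 0 :=
    le_antisymm (nonpos_of_mul_nonpos_right (by linarith) hΛ) (norm_nonneg _)
  rw [matOpNorm, norm_eq_zero, EmbeddingLike.map_eq_zero_iff, sub_eq_zero] at hnorm
  exact hnorm.symm

section NullImage

variable {E : Type*} [NormedAddCommGroup E] [NormedSpace ℝ E] [FiniteDimensional ℝ E]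
  [MeasurableSpace E] [BorelSpace E] (μ : Measure E) [μ.IsAddHaarMeasure]

theorem LipschitzOnWith.addHaar_image_eq_zero {f : E → E} {K : NNReal} {s : Set E}
    (hf : LipschitzOnWith K f s) (hs : μ s = 0) : μ (f '' s) = 0 := by
  have hH : μH[Module.finrank ℝ E] s = 0 := by
    rw [Measure.isAddLeftInvariant_eq_smul μH[Module.finrank ℝ E] μ, Measure.smul_apply, hs,
      smul_zero]
  rw [Measure.isAddLeftInvariant_eq_smul μ μH[Module.finrank ℝ E], Measure.smul_apply,
    nonpos_iff_eq_zero.1 ((hf.hausdorffMeasure_image_le (Nat.cast_nonneg _)).trans_eq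
      (by rw [hH, mul_zero])), smul_zero]

theorem LocallyLipschitz.addHaar_image_eq_zero {f : E → E} (hf : LocallyLipschitz f) {s : Set E}
    (hs : μ s = 0) : μ (f '' s) = 0 := by
  choose K t ht hK using hf
  obtain ⟨c, hc, hcover⟩ := TopologicalSpace.countable_cover_nhds ht
  have hs_eq : s = ⋃ x ∈ c, s ∩ t x := by
    rw [← Set.inter_iUnion₂, hcover, Set.inter_univ]
  rw [hs_eq, Set.image_iUnion₂]
  exact (measure_biUnion_null_iff hc).2 fun x _ ↦
    (hK x).mono Set.inter_subset_right |>.addHaar_image_eq_zero μ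
      (measure_mono_null Set.inter_subset_left hs)

theorem addHaar_image_setOf_hasFDerivAt_zero [Nontrivial E] (f : E → E) :
    μ (f '' {x | HasFDerivAt f (0 : E →L[ℝ] E) x}) = 0 :=
  addHaar_image_eq_zero_of_det_fderivWithin_eq_zero μ (fun _ hx ↦ hx.hasFDerivWithinAt)
    fun _ _ ↦ by simp [ContinuousLinearMap.det]

end NullImage

section Tilt

variable {E : Type*} [NormedAddCommGroup E] [InnerProductSpace ℝ E] [ProperSpace E]

theorem exists_isLocalMax_sub_inner_of_lt_half {w : E → ℝ} (hw : Continuous w) {y : E}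
    (hy : 0 < w y) {R : ℝ} (hR : 0 < R) (hout : ∀ z, R < dist z y → w z < w y / 2) {p : E}
    (hp : ‖p‖ ≤ w y / (4 * R)) : ∃ x, IsLocalMax (fun z ↦ w z - ⟪p, z⟫) x ∧ 0 < w x := by
  have hpdist : ∀ z, |⟪p, z - y⟫| ≤ w y / (4 * R) * dist z y := fun z ↦
    (abs_real_inner_le_norm p (z - y)).trans (by rw [dist_eq_norm]; gcongr)
  have hcR : w y / (4 * R) * R = w y / 4 := by field_simp
  obtain ⟨x, hx, hmax⟩ := (isCompact_closedBall y (2 * R)).exists_isMaxOn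
    (nonempty_closedBall.2 (by positivity))
    (hw.sub (continuous_const.inner continuous_id) : Continuous fun z ↦ w z - ⟪p, z⟫).continuousOn
  have hxy : w y + ⟪p, x - y⟫ ≤ w x := by
    have : w y - ⟪p, y⟫ ≤ w x - ⟪p, x⟫ := hmax (mem_closedBall_self (by positivity))
    rw [inner_sub_right]
    linarith
  have hnear : dist x y ≤ R := by
    by_contra! hfar
    have hdist : w y / (4 * R) * dist x y ≤ w y / (4 * R) * (2 * R) := by
      gcongr; exact mem_closedBall.1 hx
    linarith [hout x hfar, (abs_le.1 (hpdist x)).1]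
  have hnhds : closedBall y (2 * R) ∈ 𝓝 x :=
    mem_of_superset (isOpen_ball.mem_nhds (mem_ball.2 (by linarith))) ball_subset_closedBall
  have hdist : w y / (4 * R) * dist x y ≤ w y / (4 * R) * R := by gcongr
  exact ⟨x, hmax.isLocalMax hnhds, by linarith [(abs_le.1 (hpdist x)).1]⟩

theorem exists_isLocalMax_sub_inner_of_tendsto_cocompact {w : E → ℝ} (hw : Continuous w)
    (hlim : Tendsto w (cocompact E) (𝓝 0)) {y : E} (hy : 0 < w y) :
    ∃ ρ > 0, ∀ p : E, ‖p‖ ≤ ρ → ∃ x, IsLocalMax (fun z ↦ w z - ⟪p, z⟫) x ∧ 0 < w x := by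
  obtain ⟨R, hR, hout⟩ : ∃ R > 0, ∀ z, R < dist z y → w z < w y / 2 := by
    obtain ⟨K, hK, hKw⟩ := mem_cocompact.1 (hlim (Iio_mem_nhds (half_pos hy)))
    obtain ⟨r, hr⟩ := hK.isBounded.subset_closedBall y
    refine ⟨max r 1, by positivity, fun z hz ↦ hKw fun hzK ↦ ?_⟩
    linarith [mem_closedBall.1 (hr hzK), le_max_left r 1]
  exact ⟨_, by positivity, fun p hp ↦ exists_isLocalMax_sub_inner_of_lt_half hw hy hR hout hp⟩

end Tilt

section Obstacle

variable {d : ℕ} {F : Matrix (Fin d) (Fin d) ℝ → ℝ} {Λ : ℝ} {u v : EuclideanSpace ℝ (Fin d) → ℝ}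

theorem IsUniformlyElliptic.eq_of_isLocalMax_sub_sub_inner (hF : IsUniformlyElliptic F Λ)
    (hu : Differentiable ℝ u) (hv : Differentiable ℝ v) {p x : EuclideanSpace ℝ (Fin d)}
    (hmax : IsLocalMax (fun z ↦ u z - v z - ⟪p, z⟫) x) {M N : Matrix (Fin d) (Fin d) ℝ}
    (hM : M.IsSymm) (hN : N.IsSymm)
    (huM : HasFDerivAt (gradient u) (Matrix.toEuclideanCLM (𝕜 := ℝ) M) x)
    (hvN : HasFDerivAt (gradient v) (Matrix.toEuclideanCLM (𝕜 := ℝ) N) x) (hle : F N ≤ F M) :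
    M = N := by
  refine hF.eq_of_posSemidef_sub hM hN
    (Matrix.posSemidef_of_inner_toEuclideanCLM_nonneg (hN.sub hM) fun ξ ↦ ?_) hle
  have := hmax.inner_apply_self_nonpos
    (.of_forall fun y ↦ hasGradientAt_sub_sub_inner (hu y) (hv y) p) ((huM.sub hvN).sub_const p) ξ
  simp only [map_sub, sub_apply, inner_sub_right] at this ⊢
  linarith

namespace IsSolutionOn

theorem differentiable (hu : IsSolutionOn F u Set.univ) : Differentiable ℝ u :=
  (contDiffOn_univ.1 hu.1).differentiable one_ne_zero

theorem locallyLipschitz_gradient (hu : IsSolutionOn F u Set.univ) :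
    LocallyLipschitz (gradient u) := fun x ↦ by
  obtain ⟨K, t, ht, hK⟩ := hu.2.1 x trivial
  exact ⟨K, t, nhdsWithin_univ x ▸ ht, hK⟩

theorem ae_exists_hessian (hu : IsSolutionOn F u Set.univ) :
    ∀ᵐ x, ∃ M : Matrix (Fin d) (Fin d) ℝ, M.IsSymm ∧
      HasFDerivAt (gradient u) (Matrix.toEuclideanCLM (𝕜 := ℝ) M) x ∧
      F M ≤ 1 ∧ (0 < u x → F M = 1) := by
  obtain ⟨H, hH⟩ := hu.2.2.2
  filter_upwards [hH] with x hx
  exact ⟨H x, hx trivial⟩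

theorem le_of_tendsto_sub_cocompact (hd : d ≠ 0) (hF : IsUniformlyElliptic F Λ)
    (hu : IsSolutionOn F u Set.univ) (hv : IsSolutionOn F v Set.univ)
    (hlim : Tendsto (fun x ↦ u x - v x) (cocompact (EuclideanSpace ℝ (Fin d))) (𝓝 0)) :
    u ≤ v := by
  intro y
  by_contra! hy
  have : Nonempty (Fin d) := ⟨⟨0, Nat.pos_of_ne_zero hd⟩⟩
  have hud := hu.differentiable
  have hvd := hv.differentiable
  obtain ⟨ρ, hρ, hcontact⟩ := exists_isLocalMax_sub_inner_of_tendsto_cocompact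
    (w := fun x ↦ u x - v x) (hud.continuous.sub hvd.continuous) hlim (sub_pos.2 hy)
  obtain ⟨G, hG, hgood⟩ := (hu.ae_exists_hessian.and hv.ae_exists_hessian).exists_mem
  set g := fun x : EuclideanSpace ℝ (Fin d) ↦ gradient u x - gradient v x
  set crit := {x | HasFDerivAt g (0 : EuclideanSpace ℝ (Fin d) →L[ℝ] _) x}
  have hcover : closedBall 0 ρ ⊆ g '' Gᶜ ∪ g '' crit := by
    intro p hp
    obtain ⟨x, hmax, hwx⟩ := hcontact p (mem_closedBall_zero_iff.1 hp)
    have hgx : g x = p :=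
      sub_eq_zero.1 (hmax.hasGradientAt_eq_zero (hasGradientAt_sub_sub_inner (hud x) (hvd x) p))
    by_cases hxG : x ∈ G
    · obtain ⟨⟨M, hM, huM, -, hFM⟩, ⟨N, hN, hvN, hFN, -⟩⟩ := hgood x hxG
      have hux : 0 < u x := by linarith [hv.2.2.1 x trivial]
      obtain rfl := hF.eq_of_isLocalMax_sub_sub_inner hud hvd hmax hM hN huM hvN
        (by rw [hFM hux]; exact hFN)
      refine Or.inr ⟨x, ?_, hgx⟩
      rw [Set.mem_ofPred, ← sub_self (Matrix.toEuclideanCLM (𝕜 := ℝ) M)]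
      exact huM.sub hvN
    · exact Or.inl ⟨x, hxG, hgx⟩
  have hnull : volume (g '' Gᶜ ∪ g '' crit) = 0 :=
    measure_union_null
      ((hu.locallyLipschitz_gradient.sub hv.locallyLipschitz_gradient).addHaar_image_eq_zero
        volume (mem_ae_iff.1 hG))
      (addHaar_image_setOf_hasFDerivAt_zero volume g)
  exact (measure_closedBall_pos volume 0 hρ).ne' (measure_mono_null hcover hnull)

end IsSolutionOn

end Obstacle

/-- Two global solutions that agree at infinity coincide. -/
theorem statement10 (d : ℕ) (hd : 3 ≤ d) (Λ : ℝ)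
    (F : Matrix (Fin d) (Fin d) ℝ → ℝ) (hF : IsGoodOperator F Λ)
    (u v : EuclideanSpace ℝ (Fin d) → ℝ)
    (hu : IsSolutionOn F u Set.univ) (hv : IsSolutionOn F v Set.univ)
    (hlim : Tendsto (fun x => u x - v x)
      (Filter.cocompact (EuclideanSpace ℝ (Fin d))) (nhds 0)) :
    u = v := by
  have hd0 : d ≠ 0 := by omega
  have hlim' : Tendsto (fun x ↦ v x - u x) (cocompact (EuclideanSpace ℝ (Fin d))) (𝓝 0) := by
    simpa using hlim.neg
  exact le_antisymm (hu.le_of_tendsto_sub_cocompact hd0 hF.1 hv hlim)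
    (hv.le_of_tendsto_sub_cocompact hd0 hF.1 hu hlim')
end

section
/- Let A ∈ S_d, suppose F is differentiable at A with Fréchet derivative DF(A) equal to the trace functional (DF(A)[M] = tr(M) for all M ∈ S_d), and for r > 0 define Ψ_r(x) := r^{1/2}|x|^{−1/2} on ℝ^d ∖ {0}, whose Hessian is D²Ψ_r(x) = ½ r^{1/2}|x|^{−5/2}((5/2)(x⊗x)/|x|² − I). Then there exists r̄ > 1 such that F(A + D²Ψ_{r̄}(x)) ≤ F(A) for every x with |x| ≥ r̄. -/
open MeasureTheory Metric Filter

attribute [local instance] Matrix.normedAddCommGroup Matrix.normedSpace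

/-- The Hessian of `Ψ_r(x) = r^{1/2}|x|^{-1/2}`. -/
noncomputable def psiHess (d : ℕ) (r : ℝ) (x : EuclideanSpace ℝ (Fin d)) :
    Matrix (Fin d) (Fin d) ℝ :=
  ((1/2) * r ^ ((1 : ℝ)/2) * ‖x‖ ^ (-((5 : ℝ)/2))) •
    (((5 : ℝ)/2 / ‖x‖ ^ 2) • Matrix.vecMulVec (fun i => x i) (fun i => x i) - 1)

/-!
Because `DF(A)` is the trace, `F (A + P) = F A + tr P + o(‖P‖)` on symmetric matrices. For
`P = D²Ψ_r(x)` with coefficient `c = ½ r^{1/2} |x|^{-5/2}` one has `tr P = c (5/2 - d) ≤ -c/2`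
(this is where `d ≥ 3` enters), while every entry of `P` is at most `7c/2` in absolute value;
so, in the entrywise sup norm on matrices used here, `tr P ≤ -‖P‖/7`. Moreover `c ≤ 1/(2r²)`
once `|x| ≥ r`, so for `r` large every such `P` lies in the ball around `A` where the `o(‖P‖)`
error is below `‖P‖/7`.
-/

theorem HasFDerivWithinAt.exists_le_of_le_neg_mul_norm {E : Type*} [NormedAddCommGroup E]
    [NormedSpace ℝ E] {f : E → ℝ} {f' : E →L[ℝ] ℝ} {s : Set E} {a : E} {κ : ℝ}
    (hf : HasFDerivWithinAt f f' s a) (hκ : 0 < κ) :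
    ∃ δ > 0, ∀ h : E, a + h ∈ s → ‖h‖ < δ → f' h ≤ -(κ * ‖h‖) → f (a + h) ≤ f a := by
  obtain ⟨δ, hδ, hball⟩ := Metric.mem_nhdsWithin_iff.mp (hf.isLittleO.def hκ)
  refine ⟨δ, hδ, fun h hs hh hneg => ?_⟩
  have hlin : |f (a + h) - f a - f' h| ≤ κ * ‖h‖ := by
    simpa using hball ⟨by simpa [dist_eq_norm] using hh, hs⟩
  linarith [(abs_le.mp hlin).2]

noncomputable def psiCoeff {d : ℕ} (r : ℝ) (x : EuclideanSpace ℝ (Fin d)) : ℝ :=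
  (1/2) * r ^ ((1 : ℝ)/2) * ‖x‖ ^ (-((5 : ℝ)/2))

section psiHess

variable {d : ℕ} {r : ℝ} {x : EuclideanSpace ℝ (Fin d)}

theorem psiHess_eq (d : ℕ) (r : ℝ) (x : EuclideanSpace ℝ (Fin d)) :
    psiHess d r x = psiCoeff r x •
      (((5 : ℝ)/2 / ‖x‖ ^ 2) • Matrix.vecMulVec (fun i => x i) (fun i => x i) - 1) :=
  rfl

theorem psiHess_isSymm (d : ℕ) (r : ℝ) (x : EuclideanSpace ℝ (Fin d)) :
    (psiHess d r x).IsSymm := by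
  refine Matrix.IsSymm.smul (Matrix.IsSymm.sub (Matrix.IsSymm.smul ?_ _) Matrix.isSymm_one) _
  simp [Matrix.IsSymm, Matrix.transpose_vecMulVec]

theorem trace_psiHess (hx : x ≠ 0) :
    (psiHess d r x).trace = psiCoeff r x * (5/2 - d) := by
  have hnorm : (fun i => x i) ⬝ᵥ (fun i => x i) = ‖x‖ ^ 2 := by
    simp [EuclideanSpace.real_norm_sq_eq x, dotProduct, sq]
  rw [psiHess_eq, Matrix.trace_smul, Matrix.trace_sub, Matrix.trace_smul, Matrix.trace_vecMulVec,
    hnorm, Matrix.trace_one, Fintype.card_fin, smul_eq_mul, smul_eq_mul,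
    div_mul_cancel₀ _ (by positivity)]

theorem psiCoeff_nonneg (hr : 0 ≤ r) : 0 ≤ psiCoeff r x := by
  unfold psiCoeff; positivity

theorem psiCoeff_le (hr : 0 < r) (hx : r ≤ ‖x‖) : psiCoeff r x ≤ (1/2) * (r ^ 2)⁻¹ := by
  have hpow : ‖x‖ ^ (-((5 : ℝ)/2)) ≤ r ^ (-((5 : ℝ)/2)) :=
    Real.rpow_le_rpow_of_nonpos hr hx (by norm_num)
  have hexp : r ^ ((1 : ℝ)/2) * r ^ (-((5 : ℝ)/2)) = (r ^ 2)⁻¹ := by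
    rw [← Real.rpow_add hr]; norm_num
  calc psiCoeff r x ≤ (1/2) * r ^ ((1 : ℝ)/2) * r ^ (-((5 : ℝ)/2)) := by
        unfold psiCoeff; gcongr
    _ = (1/2) * (r ^ 2)⁻¹ := by rw [mul_assoc, hexp]

theorem abs_mul_div_norm_sq_le_one (x : EuclideanSpace ℝ (Fin d)) (i j : Fin d) :
    |x i * x j / ‖x‖ ^ 2| ≤ 1 := by
  rw [abs_div, abs_mul, abs_of_nonneg (sq_nonneg ‖x‖)]
  refine div_le_one_of_le₀ ?_ (sq_nonneg _)
  rw [sq]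
  exact mul_le_mul (PiLp.norm_apply_le x i) (PiLp.norm_apply_le x j) (abs_nonneg _)
    (norm_nonneg x)

theorem norm_psiHess_le (hr : 0 ≤ r) : ‖psiHess d r x‖ ≤ 7/2 * psiCoeff r x := by
  have hc := psiCoeff_nonneg (x := x) hr
  refine (Matrix.norm_le_iff (by positivity)).mpr fun i j => ?_
  have hentry : |(5 : ℝ)/2 / ‖x‖ ^ 2 * (x i * x j) - (1 : Matrix (Fin d) (Fin d) ℝ) i j|
      ≤ 7/2 := by
    have h1 := abs_mul_div_norm_sq_le_one x i j
    have h2 : |(1 : Matrix (Fin d) (Fin d) ℝ) i j| ≤ 1 := by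
      rw [Matrix.one_apply]; split_ifs <;> simp
    calc _ ≤ |(5 : ℝ)/2 / ‖x‖ ^ 2 * (x i * x j)| + |(1 : Matrix (Fin d) (Fin d) ℝ) i j| :=
          abs_sub _ _
      _ = 5/2 * |x i * x j / ‖x‖ ^ 2| + |(1 : Matrix (Fin d) (Fin d) ℝ) i j| := by
          rw [div_mul_comm, mul_comm, abs_mul, abs_of_pos (by norm_num : (0 : ℝ) < 5/2)]
      _ ≤ 7/2 := by linarith
  simp only [psiHess_eq, Matrix.smul_apply, Matrix.sub_apply, Matrix.vecMulVec_apply,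
    smul_eq_mul, Real.norm_eq_abs, abs_mul, abs_of_nonneg hc]
  rw [mul_comm (7/2)]
  exact mul_le_mul_of_nonneg_left hentry hc

theorem trace_psiHess_le_neg_mul_norm (hd : 3 ≤ d) (hr : 0 ≤ r) (hx : x ≠ 0) :
    (psiHess d r x).trace ≤ -(1/7 * ‖psiHess d r x‖) := by
  have hd' : (3 : ℝ) ≤ d := by exact_mod_cast hd
  rw [trace_psiHess hx]
  nlinarith [norm_psiHess_le (x := x) hr, psiCoeff_nonneg (x := x) hr]

theorem norm_psiHess_le_of_le_norm (hr : 0 < r) (hx : r ≤ ‖x‖) :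
    ‖psiHess d r x‖ ≤ 7/4 * (r ^ 2)⁻¹ := by
  linarith [norm_psiHess_le (x := x) hr.le, psiCoeff_le hr hx]

end psiHess

theorem statement13_general (d : ℕ) (hd : 3 ≤ d)
    (F : Matrix (Fin d) (Fin d) ℝ → ℝ)
    (A : Matrix (Fin d) (Fin d) ℝ) (hAs : A.IsSymm)
    (L : Matrix (Fin d) (Fin d) ℝ →L[ℝ] ℝ)
    (hL : ∀ M : Matrix (Fin d) (Fin d) ℝ, M.IsSymm → L M = M.trace)
    (hDF : HasFDerivWithinAt F L {M : Matrix (Fin d) (Fin d) ℝ | M.IsSymm} A) :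
    ∃ rBar : ℝ, 1 < rBar ∧
      ∀ x : EuclideanSpace ℝ (Fin d), rBar ≤ ‖x‖ →
        F (A + psiHess d rBar x) ≤ F A := by
  obtain ⟨δ, hδ, hdecrease⟩ :=
    hDF.exists_le_of_le_neg_mul_norm (show (0 : ℝ) < 1/7 by norm_num)
  have hsmall : ∀ᶠ r : ℝ in atTop, 7/4 * (r ^ 2)⁻¹ < δ :=
    (((tendsto_inv_atTop_zero.comp (tendsto_pow_atTop two_ne_zero)).const_mul (7/4)).eventually
      (gt_mem_nhds (by simpa using hδ)))
  obtain ⟨rBar, hr1, hrδ⟩ := ((eventually_gt_atTop 1).and hsmall).exists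
  refine ⟨rBar, hr1, fun x hx => ?_⟩
  have hx0 : x ≠ 0 := norm_pos_iff.mp (by linarith)
  have hsymm := psiHess_isSymm d rBar x
  refine hdecrease _ (hAs.add hsymm) ?_ ?_
  · exact (norm_psiHess_le_of_le_norm (by linarith) hx).trans_lt hrδ
  · exact (hL _ hsymm).trans_le (trace_psiHess_le_neg_mul_norm hd (by linarith) hx0)

/-- The barrier `Ψ_{r̄}` is a supersolution far out: `F(A + D²Ψ_{r̄}) ≤ F(A)`. -/
theorem statement13 (d : ℕ) (hd : 3 ≤ d) (Λ : ℝ)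
    (F : Matrix (Fin d) (Fin d) ℝ → ℝ) (hF : IsGoodOperator F Λ)
    (A : Matrix (Fin d) (Fin d) ℝ) (hAs : A.IsSymm)
    (L : Matrix (Fin d) (Fin d) ℝ →L[ℝ] ℝ)
    (hL : ∀ M : Matrix (Fin d) (Fin d) ℝ, M.IsSymm → L M = M.trace)
    (hDF : HasFDerivWithinAt F L {M : Matrix (Fin d) (Fin d) ℝ | M.IsSymm} A) :
    ∃ rBar : ℝ, 1 < rBar ∧
      ∀ x : EuclideanSpace ℝ (Fin d), rBar ≤ ‖x‖ →
        F (A + psiHess d rBar x) ≤ F A :=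
  statement13_general d hd F A hAs L hL hDF
end
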